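/- On a symplectic manifold (M,ω) of dimension 2n with Poisson bracket {·,·} and Hamiltonian vector fields X_f, the ternary Hamiltonian vector field X_{f₁,f₂,f₃} associated to the quaternary bracket {f₁,f₂,f₃,f₄}·Ω = df₁∧df₂∧df₃∧df₄∧ω^{n−2} (with Ω proportional to ω^n), defined by X_{f₁,f₂,f₃}(f₄) = {f₁,f₂,f₃,f₄}, satisfies (up to a fixed nonzero constant) X_{f₁,f₂,f₃} = {f₁,f₂} X_{f₃} + {f₂,f₃} X_{f₁} + {f₃,f₁} X_{f₂}. -/

import Mathlib

set_option synthInstance.maxHeartbeats 1000000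

noncomputable section
open ExteriorAlgebra

/-!
STATEMENT 13: On a 2n-dimensional symplectic manifold (2n ≥ 4), the ternary
Hamiltonian vector field X_{f₁,f₂,f₃} of the quaternary bracket, defined by
  {f₁,f₂,f₃,f₄} Ω = df₁∧df₂∧df₃∧df₄∧ω^{n−2}  (Ω proportional to ω^n),
  X_{f₁,f₂,f₃}(f₄) = {f₁,f₂,f₃,f₄},
satisfies, up to a fixed nonzero constant,
  X_{f₁,f₂,f₃} = {f₁,f₂} X_{f₃} + {f₂,f₃} X_{f₁} + {f₃,f₁} X_{f₂}.

As sanctioned by the context, this is formalized pointwise on the standard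
symplectic vector space ℝ^{2n} = (Fin n → ℝ) × (Fin n → ℝ) (p-coordinates first),
with ω = Σⱼ dpⱼ ∧ dqⱼ: for the covectors φ₁, φ₂, φ₃ (= dfᵢ at the point) and an
arbitrary covector ψ (= df₄), the equality of top forms
  φ₁∧φ₂∧φ₃∧ψ∧ω^{n−2} = (c · ψ({φ₁,φ₂} X_{φ₃} + {φ₂,φ₃} X_{φ₁} + {φ₃,φ₁} X_{φ₂})) • ω^n
holds for a fixed nonzero constant c (absorbing the normalizations of Ω), where
X_φ = sharp φ is the Hamiltonian vector of φ (ι_{X_φ} ω = −φ) and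
{φ,ψ} = ψ(sharp φ) is the Poisson bracket.
-/

variable (n : ℕ)

abbrev V (n : ℕ) := (Fin n → ℝ) × (Fin n → ℝ)

def dp (j : Fin n) : Module.Dual ℝ (V n) :=
  (LinearMap.proj j).comp (LinearMap.fst ℝ (Fin n → ℝ) (Fin n → ℝ))

def dq (j : Fin n) : Module.Dual ℝ (V n) :=
  (LinearMap.proj j).comp (LinearMap.snd ℝ (Fin n → ℝ) (Fin n → ℝ))

/-- the standard symplectic form ω = Σⱼ dpⱼ ∧ dqⱼ, as a constant 2-form -/
def omega : ExteriorAlgebra ℝ (Module.Dual ℝ (V n)) :=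
  ∑ j, ExteriorAlgebra.ι ℝ (dp n j) * ExteriorAlgebra.ι ℝ (dq n j)

/-- Hamiltonian vector of a covector φ : the unique X with ι_X ω = −φ -/
def sharp (φ : Module.Dual ℝ (V n)) : V n :=
  (fun j => -φ (0, Pi.single j 1), fun j => φ (Pi.single j 1, 0))

/-- pointwise Poisson bracket of two covectors: {φ,ψ} = ψ(X_φ) -/
def pb (φ ψ : Module.Dual ℝ (V n)) : ℝ := ψ (sharp n φ)

/-! Every form of degree above 2n vanishes, and contraction ι_X with a vector is an
antiderivation with ι_{X_β} ω = -β, so ι_{X_β} ω^(k+1) = -(k+1) β ∧ ω^k. Contracting the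
vanishing form α ∧ ω^n with X_β gives α ∧ β ∧ ω^(n-1) = ({α,β}/n) ω^n. Contracting the
vanishing form φ₁ ∧ φ₂ ∧ ψ ∧ ω^(n-1) with X_{φ₃} expresses (n-1) φ₁ ∧ φ₂ ∧ φ₃ ∧ ψ ∧ ω^(n-2)
through three such binary terms, which assemble into ψ of the ternary vector; hence
c = 1/(n(n-1)). -/

local infixl:70 " ⌋ " => CliffordAlgebra.contractLeft (Q := 0)

namespace ExteriorAlgebra

variable {R M : Type*} [CommRing R] [AddCommGroup M] [Module R M]

theorem ι_mem_exteriorPower_one (a : M) : ι R a ∈ ⋀[R]^1 M := by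
  rw [exteriorPower, pow_one]
  exact LinearMap.mem_range_self _ a

theorem ι_mul_ι_mem_exteriorPower_two (a b : M) : ι R a * ι R b ∈ ⋀[R]^2 M :=
  SetLike.mul_mem_graded (ι_mem_exteriorPower_one a) (ι_mem_exteriorPower_one b)

theorem ι_mul_ι_commute_ι (a b c : M) : Commute (ι R a * ι R b) (ι R c) := by
  have anticomm (x y : M) : ι R x * ι R y = -(ι R y * ι R x) :=
    eq_neg_of_add_eq_zero_left (ι_add_mul_swap x y)
  simp only [Commute, SemiconjBy, mul_assoc, anticomm b c, mul_neg]
  simp only [← mul_assoc, anticomm a c, neg_mul, neg_neg]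

theorem commute_ι_of_mem_exteriorPower_two {ω : ExteriorAlgebra R M} (hω : ω ∈ ⋀[R]^2 M)
    (c : M) : Commute ω (ι R c) := by
  rw [exteriorPower, pow_two] at hω
  refine Submodule.mul_induction_on hω ?_ fun x y hx hy => hx.add_left hy
  rintro _ ⟨a, rfl⟩ _ ⟨b, rfl⟩
  exact ι_mul_ι_commute_ι a b c

theorem contractLeft_mul_of_mem_exteriorPower_two (d : Module.Dual R M)
    {ω : ExteriorAlgebra R M} (hω : ω ∈ ⋀[R]^2 M) (x : ExteriorAlgebra R M) :
    d ⌋ (ω * x) = d ⌋ ω * x + ω * (d ⌋ x) := by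
  rw [exteriorPower, pow_two] at hω
  refine Submodule.mul_induction_on hω ?_ fun y z hy hz => ?_
  · rintro _ ⟨a, rfl⟩ _ ⟨b, rfl⟩
    simp only [mul_assoc, CliffordAlgebra.contractLeft_ι_mul,
      CliffordAlgebra.contractLeft_ι, Algebra.algebraMap_eq_smul_one, mul_sub, sub_mul,
      mul_smul_comm, smul_mul_assoc, mul_one]
    abel
  · simp only [add_mul, map_add, hy, hz]
    abel

theorem contractLeft_pow_succ_of_mem_exteriorPower_two {d : Module.Dual R M}
    {ω : ExteriorAlgebra R M} (hω : ω ∈ ⋀[R]^2 M) {u : M} (hd : d ⌋ ω = ι R u) (k : ℕ) :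
    d ⌋ (ω ^ (k + 1)) = (k + 1) • (ι R u * ω ^ k) := by
  induction k with
  | zero => simp [hd]
  | succ k ih =>
    rw [pow_succ' ω (k + 1), contractLeft_mul_of_mem_exteriorPower_two d hω, ih, hd,
      mul_smul_comm, ← mul_assoc, (commute_ι_of_mem_exteriorPower_two hω u).eq, mul_assoc,
      ← pow_succ', succ_nsmul' _ (k + 1)]

theorem contractLeft_ι_mul_ι_mul_ι_mul (d : Module.Dual R M) (a b c : M)
    (x : ExteriorAlgebra R M) :
    d ⌋ (ι R a * ι R b * ι R c * x) = d a • (ι R b * ι R c * x) - d b • (ι R a * ι R c * x)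
      + d c • (ι R a * ι R b * x) - ι R a * ι R b * ι R c * (d ⌋ x) := by
  simp only [mul_assoc, CliffordAlgebra.contractLeft_ι_mul, mul_sub, mul_smul_comm]
  abel

theorem eq_zero_of_mem_exteriorPower_of_finrank_lt {K E : Type*} [Field K] [AddCommGroup E]
    [Module K E] [FiniteDimensional K E] {k : ℕ} (hk : Module.finrank K E < k)
    {x : ExteriorAlgebra K E} (hx : x ∈ ⋀[K]^k E) : x = 0 := by
  have : ⋀[K]^k E = ⊥ := by
    rw [← Submodule.finrank_eq_zero, exteriorPower.finrank_eq, Nat.choose_eq_zero_of_lt hk]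
  simpa [this] using hx

end ExteriorAlgebra

theorem finrank_dual_V : Module.finrank ℝ (Module.Dual ℝ (V n)) = 2 * n := by
  rw [Subspace.dual_finrank_eq, Module.finrank_prod, Module.finrank_fin_fun]
  ring

theorem omega_mem_exteriorPower_two : omega n ∈ ⋀[ℝ]^2 (Module.Dual ℝ (V n)) :=
  Submodule.sum_mem _ fun _ _ => ι_mul_ι_mem_exteriorPower_two _ _

theorem eq_zero_of_mem_exteriorPower_of_two_mul_lt {k : ℕ} (hk : 2 * n < k)
    {x : ExteriorAlgebra ℝ (Module.Dual ℝ (V n))} (hx : x ∈ ⋀[ℝ]^k (Module.Dual ℝ (V n))) :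
    x = 0 :=
  eq_zero_of_mem_exteriorPower_of_finrank_lt (by rwa [finrank_dual_V]) hx

theorem ι_mul_omega_pow_eq_zero (φ : Module.Dual ℝ (V n)) : ι ℝ φ * omega n ^ n = 0 :=
  eq_zero_of_mem_exteriorPower_of_two_mul_lt n (k := 1 + n • 2) (by rw [smul_eq_mul]; omega)
    (SetLike.mul_mem_graded (ι_mem_exteriorPower_one φ)
      (SetLike.pow_mem_graded n (omega_mem_exteriorPower_two n)))

theorem sum_dp_dq (φ : Module.Dual ℝ (V n)) :
    ∑ j, (φ (Pi.single j 1, 0) • dp n j + φ (0, Pi.single j 1) • dq n j) = φ := by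
  ext j <;> simp [dp, dq, Pi.single_apply]

theorem contractLeft_sharp_omega (φ : Module.Dual ℝ (V n)) :
    Module.Dual.eval ℝ (V n) (sharp n φ) ⌋ omega n = ι ℝ (-φ) := by
  conv_rhs => rw [← sum_dp_dq n φ]
  simp only [omega, map_sum, map_neg, map_add, map_smul, CliffordAlgebra.contractLeft_ι_mul,
    CliffordAlgebra.contractLeft_ι, Algebra.algebraMap_eq_smul_one, mul_smul_comm, mul_one,
    ← Finset.sum_neg_distrib]
  refine Finset.sum_congr rfl fun j _ => ?_
  simp only [sharp, dp, dq, Module.Dual.eval_apply, LinearMap.coe_comp, LinearMap.coe_proj,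
    LinearMap.coe_fst, LinearMap.coe_snd, Function.comp_apply, Function.eval, neg_smul,
    neg_add_rev]
  abel

theorem pb_antisymm (φ ψ : Module.Dual ℝ (V n)) : pb n φ ψ = -pb n ψ φ := by
  unfold pb
  conv_lhs => rw [← sum_dp_dq n ψ]
  conv_rhs => rw [← sum_dp_dq n φ]
  simp only [dp, dq, sharp, LinearMap.coe_sum, Finset.sum_apply, LinearMap.add_apply,
    LinearMap.smul_apply, LinearMap.coe_comp, LinearMap.coe_proj, LinearMap.coe_fst,
    LinearMap.coe_snd, Function.comp_apply, Function.eval, smul_eq_mul, mul_neg,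
    ← Finset.sum_neg_distrib, neg_add_rev, neg_neg]
  exact Finset.sum_congr rfl fun _ _ => by ring

theorem ι_mul_ι_mul_omega_pow (k : ℕ) (α β : Module.Dual ℝ (V (k + 1))) :
    ι ℝ α * ι ℝ β * omega (k + 1) ^ k =
      (pb (k + 1) α β / (k + 1 : ℕ)) • omega (k + 1) ^ (k + 1) := by
  have h := congrArg (Module.Dual.eval ℝ _ (sharp (k + 1) β) ⌋ ·)
    (ι_mul_omega_pow_eq_zero (k + 1) α)
  simp only [CliffordAlgebra.contractLeft_ι_mul, map_zero,
    contractLeft_pow_succ_of_mem_exteriorPower_two (omega_mem_exteriorPower_two _)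
      (contractLeft_sharp_omega _ β), ← Nat.cast_smul_eq_nsmul ℝ, mul_smul_comm, map_neg,
    neg_mul, mul_neg, ← mul_assoc, Module.Dual.eval_apply] at h
  have hk : ((k + 1 : ℕ) : ℝ) ≠ 0 := by positivity
  refine smul_right_injective _ hk ?_
  dsimp only
  rw [smul_smul, mul_div_cancel₀ _ hk, pb_antisymm, pb]
  linear_combination (norm := module) h

theorem smul_ι_mul_ι_mul_ι_mul_ι_mul_omega_pow (m : ℕ)
    (φ₁ φ₂ φ₃ ψ : Module.Dual ℝ (V (m + 1 + 1))) :
    ((m + 1 : ℕ) : ℝ) • (ι ℝ φ₁ * ι ℝ φ₂ * ι ℝ φ₃ * ι ℝ ψ * omega (m + 1 + 1) ^ m) =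
      (ψ (pb _ φ₁ φ₂ • sharp _ φ₃ + pb _ φ₂ φ₃ • sharp _ φ₁ + pb _ φ₃ φ₁ • sharp _ φ₂) /
        (m + 1 + 1 : ℕ)) • omega (m + 1 + 1) ^ (m + 1 + 1) := by
  have hzero : ι ℝ φ₁ * ι ℝ φ₂ * ι ℝ ψ * omega (m + 1 + 1) ^ (m + 1) = 0 :=
    eq_zero_of_mem_exteriorPower_of_two_mul_lt _ (k := 1 + 1 + 1 + (m + 1) • 2)
      (by rw [smul_eq_mul]; omega)
      (SetLike.mul_mem_graded (SetLike.mul_mem_graded (SetLike.mul_mem_graded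
        (ι_mem_exteriorPower_one φ₁) (ι_mem_exteriorPower_one φ₂)) (ι_mem_exteriorPower_one ψ))
        (SetLike.pow_mem_graded _ (omega_mem_exteriorPower_two _)))
  have h := congrArg (Module.Dual.eval ℝ _ (sharp _ φ₃) ⌋ ·) hzero
  simp only [contractLeft_ι_mul_ι_mul_ι_mul, map_zero,
    contractLeft_pow_succ_of_mem_exteriorPower_two (omega_mem_exteriorPower_two _)
      (contractLeft_sharp_omega _ φ₃), ι_mul_ι_mul_omega_pow, ← Nat.cast_smul_eq_nsmul ℝ,
    Module.Dual.eval_apply] at h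
  have hswap : ι ℝ φ₁ * ι ℝ φ₂ * ι ℝ ψ * ι ℝ (-φ₃) = ι ℝ φ₁ * ι ℝ φ₂ * ι ℝ φ₃ * ι ℝ ψ := by
    rw [map_neg, mul_neg, mul_assoc _ (ι ℝ ψ), mul_assoc _ (ι ℝ φ₃),
      eq_neg_of_add_eq_zero_left (ι_add_mul_swap ψ φ₃), mul_neg, neg_neg]
  rw [mul_smul_comm, ← mul_assoc, hswap,
    show φ₂ (sharp _ φ₃) = -φ₃ (sharp _ φ₂) from pb_antisymm _ φ₃ φ₂] at h
  simp only [pb, map_add, map_smul, smul_eq_mul] at h ⊢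
  linear_combination (norm := module) -h

theorem ternary_hamiltonian_field_of_quaternary_bracket (hn : 2 ≤ n) :
    ∃ c : ℝ, c ≠ 0 ∧
      ∀ φ₁ φ₂ φ₃ ψ : Module.Dual ℝ (V n),
        ExteriorAlgebra.ι ℝ φ₁ * ExteriorAlgebra.ι ℝ φ₂ * ExteriorAlgebra.ι ℝ φ₃ *
            ExteriorAlgebra.ι ℝ ψ * omega n ^ (n - 2) =
          (c * ψ (pb n φ₁ φ₂ • sharp n φ₃ + pb n φ₂ φ₃ • sharp n φ₁ +
              pb n φ₃ φ₁ • sharp n φ₂)) • omega n ^ n := by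
  obtain ⟨m, rfl⟩ : ∃ m, n = m + 1 + 1 := ⟨n - 2, by omega⟩
  refine ⟨(((m + 1 + 1 : ℕ) : ℝ) * (m + 1 : ℕ))⁻¹, by positivity, fun φ₁ φ₂ φ₃ ψ => ?_⟩
  have hm : ((m + 1 : ℕ) : ℝ) ≠ 0 := by positivity
  refine smul_right_injective _ hm ?_
  dsimp only
  rw [show m + 1 + 1 - 2 = m by omega, smul_ι_mul_ι_mul_ι_mul_ι_mul_omega_pow, smul_smul]
  congr 1
  field_simp
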